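/- arXiv:1810.09445 — 5 statements merged into one kernel-verified Lean document; each statement's English description precedes it below -/
import Mathlib

section
/- Let R be an algebraic curvature tensor on ℝⁿ (n ≥ 4), i.e., a quadrilinear map satisfying R(x,y,z,w) = -R(y,x,z,w) = -R(x,y,w,z) = R(z,w,x,y) and the first Bianchi identity. Suppose there is a constant c such that for every orthonormal four-frame {e₁,e₂,e₃,e₄} one has R(e₁,e₂,e₁,e₂) + R(e₁,e₂,e₃,e₄) ≥ c. Then for every λ, μ ∈ [-1,1] and every orthonormal four-frame {e₁,e₂,e₃,e₄}, R₁₃₁₃ + λ²R₁₄₁₄ + μ²R₂₃₂₃ + λ²μ²R₂₄₂₄ - 2λμ R₁₂₃₄ ≥ (1+λ²)(1+μ²)c, where R_{ijkl} := R(e_i,e_j,e_k,e_l). -/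
open scoped RealInnerProductSpace

lemma key_scalar (c A1 B1 C1 A2 B2 C2 l m : ℝ)
    (k1 : c ≤ A1 + C1) (k2 : c ≤ A1 - C1) (k3 : c ≤ B1 + C1) (k4 : c ≤ B1 - C1)
    (k5 : c ≤ A2 + C2) (k6 : c ≤ A2 - C2) (k7 : c ≤ B2 + C2) (k8 : c ≤ B2 - C2) :
    (1 + l^2) * (1 + m^2) * c ≤
      A1 + l^2 * A2 + m^2 * B2 + l^2 * m^2 * B1 + 2 * l * m * (C1 + C2) := by
  rcases le_total 0 C1 with hC1 | hC1 <;> rcases le_total 0 C2 with hC2 | hC2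
  · nlinarith [mul_nonneg (sq_nonneg (1 + l*m)) hC1, mul_nonneg (sq_nonneg (l + m)) hC2,
      mul_nonneg (sq_nonneg (l*m)) (by linarith : (0:ℝ) ≤ B1 - C1 - c),
      mul_nonneg (sq_nonneg l) (by linarith : (0:ℝ) ≤ A2 - C2 - c),
      mul_nonneg (sq_nonneg m) (by linarith : (0:ℝ) ≤ B2 - C2 - c)]
  · nlinarith [mul_nonneg (sq_nonneg (1 + l*m)) hC1,
      mul_nonneg (sq_nonneg (l - m)) (neg_nonneg.2 hC2),
      mul_nonneg (sq_nonneg (l*m)) (by linarith : (0:ℝ) ≤ B1 - C1 - c),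
      mul_nonneg (sq_nonneg l) (by linarith : (0:ℝ) ≤ A2 + C2 - c),
      mul_nonneg (sq_nonneg m) (by linarith : (0:ℝ) ≤ B2 + C2 - c)]
  · nlinarith [mul_nonneg (sq_nonneg (1 - l*m)) (neg_nonneg.2 hC1),
      mul_nonneg (sq_nonneg (l + m)) hC2,
      mul_nonneg (sq_nonneg (l*m)) (by linarith : (0:ℝ) ≤ B1 + C1 - c),
      mul_nonneg (sq_nonneg l) (by linarith : (0:ℝ) ≤ A2 - C2 - c),
      mul_nonneg (sq_nonneg m) (by linarith : (0:ℝ) ≤ B2 - C2 - c)]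
  · nlinarith [mul_nonneg (sq_nonneg (1 - l*m)) (neg_nonneg.2 hC1),
      mul_nonneg (sq_nonneg (l - m)) (neg_nonneg.2 hC2),
      mul_nonneg (sq_nonneg (l*m)) (by linarith : (0:ℝ) ≤ B1 + C1 - c),
      mul_nonneg (sq_nonneg l) (by linarith : (0:ℝ) ≤ A2 + C2 - c),
      mul_nonneg (sq_nonneg m) (by linarith : (0:ℝ) ≤ B2 + C2 - c)]

/-- Lemma 3.1: If an algebraic curvature tensor `R` on `ℝⁿ` (`n ≥ 4`) satisfies
`R₁₂₁₂ + R₁₂₃₄ ≥ c` for all orthonormal four-frames, then for all `λ, μ ∈ [-1,1]` and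
all orthonormal four-frames,
`R₁₃₁₃ + λ²R₁₄₁₄ + μ²R₂₃₂₃ + λ²μ²R₂₄₂₄ - 2λμR₁₂₃₄ ≥ (1+λ²)(1+μ²)c`. -/
theorem stmt_0 {n : ℕ} (hn : 4 ≤ n)
    (R : EuclideanSpace ℝ (Fin n) →ₗ[ℝ] EuclideanSpace ℝ (Fin n) →ₗ[ℝ]
      EuclideanSpace ℝ (Fin n) →ₗ[ℝ] EuclideanSpace ℝ (Fin n) →ₗ[ℝ] ℝ)
    (hA1 : ∀ x y z w, R x y z w = - R y x z w)
    (hA2 : ∀ x y z w, R x y z w = - R x y w z)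
    (hS : ∀ x y z w, R x y z w = R z w x y)
    (hBianchi : ∀ x y z w, R x y z w + R y z x w + R z x y w = 0)
    (c : ℝ)
    (hc : ∀ e : Fin 4 → EuclideanSpace ℝ (Fin n), Orthonormal ℝ e →
      c ≤ R (e 0) (e 1) (e 0) (e 1) + R (e 0) (e 1) (e 2) (e 3)) :
    ∀ lam mu : ℝ, lam ∈ Set.Icc (-1 : ℝ) 1 → mu ∈ Set.Icc (-1 : ℝ) 1 →
      ∀ e : Fin 4 → EuclideanSpace ℝ (Fin n), Orthonormal ℝ e →
        (1 + lam ^ 2) * (1 + mu ^ 2) * c ≤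
          R (e 0) (e 2) (e 0) (e 2) + lam ^ 2 * R (e 0) (e 3) (e 0) (e 3)
            + mu ^ 2 * R (e 1) (e 2) (e 1) (e 2)
            + lam ^ 2 * mu ^ 2 * R (e 1) (e 3) (e 1) (e 3)
            - 2 * lam * mu * R (e 0) (e 1) (e 2) (e 3) := by
  intro lam mu _ _ e he
  have frame : ∀ σ : Fin 4 → Fin 4, Function.Injective σ →
      c ≤ R (e (σ 0)) (e (σ 1)) (e (σ 0)) (e (σ 1))
            + R (e (σ 0)) (e (σ 1)) (e (σ 2)) (e (σ 3)) :=
    fun σ hσ => hc (e ∘ σ) (he.comp σ hσ)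
  have h1 := frame ![0, 2, 3, 1] (by decide)
  have h2 := frame ![2, 0, 3, 1] (by decide)
  have h3 := frame ![3, 1, 0, 2] (by decide)
  have h4 := frame ![1, 3, 0, 2] (by decide)
  have h5 := frame ![0, 3, 1, 2] (by decide)
  have h6 := frame ![3, 0, 1, 2] (by decide)
  have h7 := frame ![1, 2, 0, 3] (by decide)
  have h8 := frame ![2, 1, 0, 3] (by decide)
  simp only [Matrix.cons_val_zero, Matrix.cons_val_one, Matrix.head_cons,
    Matrix.cons_val_two, Matrix.tail_cons, Matrix.cons_val_three, Matrix.head_fin_const,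
    Matrix.cons_val_fin_one] at h1 h2 h3 h4 h5 h6 h7 h8
  set A1 := R (e 0) (e 2) (e 0) (e 2) with hA1d
  set B1 := R (e 1) (e 3) (e 1) (e 3) with hB1d
  set C1 := R (e 0) (e 2) (e 3) (e 1) with hC1d
  set A2 := R (e 0) (e 3) (e 0) (e 3) with hA2d
  set B2 := R (e 1) (e 2) (e 1) (e 2) with hB2d
  set C2 := R (e 0) (e 3) (e 1) (e 2) with hC2d
  -- symmetry facts
  have k1 : c ≤ A1 + C1 := h1
  have k2 : c ≤ A1 - C1 := by
    have s1 := hA1 (e 2) (e 0) (e 2) (e 0)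
    have s2 := hA2 (e 0) (e 2) (e 2) (e 0)
    have s3 := hA1 (e 2) (e 0) (e 3) (e 1)
    linarith [h2]
  have k3 : c ≤ B1 + C1 := by
    have s1 := hA1 (e 3) (e 1) (e 3) (e 1)
    have s2 := hA2 (e 1) (e 3) (e 3) (e 1)
    have s3 := hS (e 3) (e 1) (e 0) (e 2)
    have s4 := hA1 (e 0) (e 2) (e 3) (e 1)
    have s5 := hA2 (e 2) (e 0) (e 3) (e 1)
    have s6 := hA1 (e 2) (e 0) (e 1) (e 3)
    linarith [h3]
  have k4 : c ≤ B1 - C1 := by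
    have s1 := hS (e 1) (e 3) (e 0) (e 2)
    have s2 := hA2 (e 0) (e 2) (e 1) (e 3)
    linarith [h4]
  have k5 : c ≤ A2 + C2 := h5
  have k6 : c ≤ A2 - C2 := by
    have s1 := hA1 (e 3) (e 0) (e 3) (e 0)
    have s2 := hA2 (e 0) (e 3) (e 3) (e 0)
    have s3 := hA1 (e 3) (e 0) (e 1) (e 2)
    linarith [h6]
  have k7 : c ≤ B2 + C2 := by
    have s1 := hS (e 1) (e 2) (e 0) (e 3)
    linarith [h7]
  have k8 : c ≤ B2 - C2 := by
    have s1 := hA1 (e 2) (e 1) (e 2) (e 1)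
    have s2 := hA2 (e 1) (e 2) (e 2) (e 1)
    have s3 := hA1 (e 2) (e 1) (e 0) (e 3)
    have s4 := hS (e 1) (e 2) (e 0) (e 3)
    linarith [h8]
  have hB : R (e 0) (e 1) (e 2) (e 3) = - C1 - C2 := by
    have b := hBianchi (e 0) (e 1) (e 2) (e 3)
    have s1 := hS (e 1) (e 2) (e 0) (e 3)
    have s2 := hA1 (e 2) (e 0) (e 1) (e 3)
    have s3 := hA2 (e 0) (e 2) (e 1) (e 3)
    linarith
  rw [hB]
  have := key_scalar c A1 B1 C1 A2 B2 C2 lam mu k1 k2 k3 k4 k5 k6 k7 k8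
  linarith [this]
end

section
/- Let σ: ℝⁿ × ℝⁿ × ℝⁿ → ℝ (n ≥ 4) be a trilinear fully symmetric function with components σ_{ijk} in an orthonormal basis. Define H^i := Σ_j σ_{jji} and the algebraic curvature tensor R̃_{ijkl} := Σ_m (σ_{ikm}σ_{jlm} - σ_{ilm}σ_{jkm}). Then for every orthonormal frame {e₁,...,eₙ}: R̃₁₂₁₂ + R̃₁₂₃₄ ≥ (1/2)[ (6/(2n+3)) Σ_i (H^i)² - Σ_{i,j,k} σ_{ijk}² ]. -/
/-!
Write `P_m = σ_mmm² + 3 Σ_{j≠m} σ_jjm²`. By symmetry, `Σ σ_ijk²` is `Σ_m P_m` plus the squares of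
the entries with three distinct indices, so everything can be sorted by the last index `m`.
A weighted Cauchy–Schwarz inequality on `H^m = Σ_j σ_jjm` (weight `1` on `σ_mmm`, `1/2` on the
lumped pair `σ_11m + σ_22m`, `1/3` on the rest; total `(2n+3)/6`) bounds `6/(2n+3) (H^m)²` by
`P_m + 2 σ_11m σ_22m`, which is the diagonal part of `2 R̃₁₂₁₂` in slice `m`. For `m ≥ 5` the
remaining terms of `2 R̃₁₂₁₂ + 2 R̃₁₂₃₄` in slice `m` are dominated by the distinct-index squares
`σ_ijm²`, `i, j ≤ 4`. For `m ≤ 4` they mix entries such as `σ_123 (σ_224 - σ_114)`; these are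
absorbed by completing squares against the distinct-index squares and the slack left over in the
Cauchy–Schwarz steps.
-/

open Finset

theorem two_mul_mul_le_of_sq_le {z γ Z : ℝ} (hγ : 0 ≤ γ) (hZ : 0 ≤ Z) (hz : z ^ 2 ≤ γ * Z)
    (X : ℝ) : 2 * X * z ≤ γ * X ^ 2 + Z := by
  rcases hZ.eq_or_lt with rfl | hZ
  · obtain rfl : z = 0 := pow_eq_zero_iff two_ne_zero |>.1 (by nlinarith [sq_nonneg z])
    nlinarith [mul_nonneg hγ (sq_nonneg X)]
  · nlinarith [sq_nonneg (X * z - Z), mul_le_mul_of_nonneg_right hz (sq_nonneg X)]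

theorem sq_add_add_le {x y z α β γ Z : ℝ} (hα : 0 < α) (hβ : 0 < β) (hγ : 0 ≤ γ)
    (hZ : 0 ≤ Z) (hz : z ^ 2 ≤ γ * Z) :
    (x + y + z) ^ 2 ≤ (α + β + γ) * (x ^ 2 / α + y ^ 2 / β + Z) := by
  obtain ⟨X, rfl⟩ : ∃ X, x = α * X := ⟨x / α, by field_simp⟩
  obtain ⟨Y, rfl⟩ : ∃ Y, y = β * Y := ⟨y / β, by field_simp⟩
  have hX := two_mul_mul_le_of_sq_le hγ hZ hz X
  have hY := two_mul_mul_le_of_sq_le hγ hZ hz Y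
  have e : (α + β + γ) * ((α * X) ^ 2 / α + (β * Y) ^ 2 / β + Z) - (α * X + β * Y + z) ^ 2
      = α * β * (X - Y) ^ 2 + α * (γ * X ^ 2 + Z - 2 * X * z)
        + β * (γ * Y ^ 2 + Z - 2 * Y * z) + (γ * Z - z ^ 2) := by
    field_simp
    ring
  nlinarith [mul_nonneg (mul_nonneg hα.le hβ.le) (sq_nonneg (X - Y)),
    mul_nonneg hα.le (sub_nonneg.2 hX), mul_nonneg hβ.le (sub_nonneg.2 hY)]

theorem sq_add_add_sum_le {ι : Type*} (F : Finset ι) (w : ι → ℝ) {x y α β : ℝ}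
    (hα : 0 < α) (hβ : 0 < β) :
    (x + y + ∑ j ∈ F, w j) ^ 2
      ≤ (α + β + #F / 3) * (x ^ 2 / α + y ^ 2 / β + 3 * ∑ j ∈ F, w j ^ 2) := by
  refine sq_add_add_le hα hβ (by positivity) (by positivity) ?_
  calc (∑ j ∈ F, w j) ^ 2 ≤ #F * ∑ j ∈ F, w j ^ 2 := sq_sum_le_card_mul_sum_sq
    _ = #F / 3 * (3 * ∑ j ∈ F, w j ^ 2) := by ring

section FiniteSums

variable {ι : Type*} [DecidableEq ι]

theorem sum_four (f : ι → ℝ) {p q r w : ι} (hpq : p ≠ q) (hpr : p ≠ r) (hpw : p ≠ w)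
    (hqr : q ≠ r) (hqw : q ≠ w) (hrw : r ≠ w) :
    ∑ j ∈ {p, q, r, w}, f j = f p + f q + f r + f w := by
  rw [sum_insert (by simp [hpq, hpr, hpw]), sum_insert (by simp [hqr, hqw]), sum_pair hrw]
  ring

variable [Fintype ι]

theorem sum_eq_add_add_add_sum_compl (f : ι → ℝ) {p q r : ι} (hpq : p ≠ q) (hpr : p ≠ r)
    (hqr : q ≠ r) : ∑ j, f j = f p + f q + f r + ∑ j ∈ {p, q, r}ᶜ, f j := by
  rw [← sum_add_sum_compl {p, q, r} f, sum_insert (by simp [hpq, hpr]), sum_pair hqr]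
  ring

theorem sum_eq_add_add_add_add_sum_compl (f : ι → ℝ) {p q r w : ι} (hpq : p ≠ q) (hpr : p ≠ r)
    (hpw : p ≠ w) (hqr : q ≠ r) (hqw : q ≠ w) (hrw : r ≠ w) :
    ∑ j, f j = f p + f q + f r + f w + ∑ j ∈ {p, q, r, w}ᶜ, f j := by
  rw [← sum_add_sum_compl {p, q, r, w} f, sum_four f hpq hpr hpw hqr hqw hrw]

theorem cast_card_compl (s : Finset ι) : (#sᶜ : ℝ) = Fintype.card ι - #s := by
  rw [card_compl, Nat.cast_sub (card_le_univ s)]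

theorem mul_sq_sum_le_of_pair (v : ι → ℝ) {p q r : ι} (hpq : p ≠ q) (hpr : p ≠ r)
    (hqr : q ≠ r) :
    6 / (2 * Fintype.card ι + 3) * (∑ j, v j) ^ 2
      ≤ v p ^ 2 + 3 * ∑ j ∈ univ.erase p, v j ^ 2 + 2 * (v q * v r) - (v q - v r) ^ 2 / 4 := by
  set F : Finset ι := {p, q, r}ᶜ
  have hsum : ∑ j, v j = v p + (v q + v r) + ∑ j ∈ F, v j := by
    rw [sum_eq_add_add_add_sum_compl v hpq hpr hqr]; ring
  have hsq : ∑ j ∈ univ.erase p, v j ^ 2 = v q ^ 2 + v r ^ 2 + ∑ j ∈ F, v j ^ 2 := by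
    rw [sum_erase_eq_sub (mem_univ p), sum_eq_add_add_add_sum_compl (v · ^ 2) hpq hpr hqr]; ring
  have hcs := sq_add_add_sum_le F v (x := v p) (y := v q + v r) one_pos one_half_pos
  rw [cast_card_compl, card_eq_three.2 ⟨p, q, r, hpq, hpr, hqr, rfl⟩, ← hsum] at hcs
  rw [hsq, div_mul_eq_mul_div, div_le_iff₀ (by positivity)]
  nlinarith [mul_nonneg (by positivity : (0 : ℝ) ≤ 2 * Fintype.card ι + 3) (sq_nonneg (v q - v r))]

-- Cauchy–Schwarz with weights `1, 2/3, 1/3` on `v p + v q`, `v r + v w` and the remaining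
-- coordinates, whose total `(2 * card ι + 2) / 6` leaves room to spare.
theorem mul_sq_sum_le_of_two_pairs (v : ι → ℝ) {p q r w : ι} (hpq : p ≠ q) (hpr : p ≠ r)
    (hpw : p ≠ w) (hqr : q ≠ r) (hqw : q ≠ w) (hrw : r ≠ w) :
    6 / (2 * Fintype.card ι + 3) * (∑ j, v j) ^ 2
      ≤ v p ^ 2 + 3 * ∑ j ∈ univ.erase p, v j ^ 2 + 2 * (v p * v q) - 2 * v q ^ 2
        - (v r - v w) ^ 2 / 6 := by
  set F : Finset ι := {p, q, r, w}ᶜ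
  have hsum : ∑ j, v j = (v p + v q) + (v r + v w) + ∑ j ∈ F, v j := by
    rw [sum_eq_add_add_add_add_sum_compl v hpq hpr hpw hqr hqw hrw]; ring
  have hsq : ∑ j ∈ univ.erase p, v j ^ 2 = v q ^ 2 + v r ^ 2 + v w ^ 2 + ∑ j ∈ F, v j ^ 2 := by
    rw [sum_erase_eq_sub (mem_univ p),
      sum_eq_add_add_add_add_sum_compl (v · ^ 2) hpq hpr hpw hqr hqw hrw]
    ring
  have hcs := sq_add_add_sum_le F v (x := v p + v q) (y := v r + v w) one_pos
    (by norm_num : (0 : ℝ) < 2 / 3)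
  rw [cast_card_compl, card_eq_four.2 ⟨p, q, r, w, hpq, hpr, hpw, hqr, hqw, hrw, rfl⟩,
    ← hsum] at hcs
  have hF : 0 ≤ ∑ j ∈ F, v j ^ 2 := sum_nonneg fun j _ => sq_nonneg (v j)
  rw [hsq, div_mul_eq_mul_div, div_le_iff₀ (by positivity)]
  nlinarith [mul_nonneg (by positivity : (0 : ℝ) ≤ 2 * Fintype.card ι + 3) (sq_nonneg (v r - v w)),
    sq_nonneg (v p + v q), sq_nonneg (v r + v w)]

end FiniteSums

section SymmetricTensor

variable {ι : Type*} [Fintype ι] [DecidableEq ι] (s : ι → ι → ι → ℝ)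

def sliceSqRepeated (m : ι) : ℝ := s m m m ^ 2 + 3 * ∑ j ∈ univ.erase m, s j j m ^ 2

def sliceSqDistinct (U : Finset ι) (m : ι) : ℝ :=
  ∑ i ∈ U, ∑ j ∈ U, if i ≠ j ∧ i ≠ m ∧ j ≠ m then s i j m ^ 2 else 0

def gaussSlice (i j k l m : ι) : ℝ := s i k m * s j l m - s i l m * s j k m

variable {s}

theorem sum_sq_slice_eq (h₁ : ∀ i j k, s i j k = s j i k) (h₂ : ∀ i j k, s i j k = s i k j)
    (m : ι) :
    ∑ i, ∑ j, s i j m ^ 2 = ∑ i, s i i m ^ 2 + 2 * ∑ j ∈ univ.erase m, s m m j ^ 2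
      + sliceSqDistinct s univ m := by
  have split (i j : ι) : s i j m ^ 2 = (if i = j then s i i m ^ 2 else 0)
      + (if i = m ∧ j ≠ m then s m m j ^ 2 else 0) + (if j = m ∧ i ≠ m then s m m i ^ 2 else 0)
      + (if i ≠ j ∧ i ≠ m ∧ j ≠ m then s i j m ^ 2 else 0) := by
    by_cases hij : i = j
    · subst hij; simp
    by_cases him : i = m
    · subst him; simp [hij, Ne.symm hij, h₂ i j i]
    by_cases hjm : j = m
    · subst hjm; simp [hij, h₁ i j j, h₂ j i j]
    · simp [hij, him, hjm]
  rw [sum_congr rfl fun i _ => sum_congr rfl fun j _ => split i j]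
  simp only [sum_add_distrib, sliceSqDistinct, ite_and]
  simp [sum_ite, filter_ne', two_mul, add_assoc]

theorem sum_sq_eq_sum_slice (h₁ : ∀ i j k, s i j k = s j i k)
    (h₂ : ∀ i j k, s i j k = s i k j) :
    ∑ i, ∑ j, ∑ k, s i j k ^ 2 = ∑ m, (sliceSqRepeated s m + sliceSqDistinct s univ m) := by
  have hswap : ∑ m, ∑ j ∈ univ.erase m, s m m j ^ 2 = ∑ m, ∑ j ∈ univ.erase m, s j j m ^ 2 := by
    simp only [sum_erase_eq_sub (mem_univ _), sum_sub_distrib]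
    rw [sum_comm]
  have hdiag (m : ι) : ∑ i, s i i m ^ 2 = s m m m ^ 2 + ∑ i ∈ univ.erase m, s i i m ^ 2 :=
    (add_sum_erase _ _ (mem_univ m)).symm
  calc ∑ i, ∑ j, ∑ k, s i j k ^ 2 = ∑ m, ∑ i, ∑ j, s i j m ^ 2 :=
        (sum_congr rfl fun i _ => sum_comm).trans sum_comm
    _ = ∑ m, (∑ i, s i i m ^ 2 + 2 * ∑ j ∈ univ.erase m, s m m j ^ 2
          + sliceSqDistinct s univ m) :=
        sum_congr rfl fun m _ => sum_sq_slice_eq h₁ h₂ m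
    _ = ∑ m, (sliceSqRepeated s m + sliceSqDistinct s univ m) := by
        simp only [hdiag, sum_add_distrib, ← mul_sum, hswap, sliceSqRepeated]
        ring

theorem sum_slice_le_sum_sq (h₁ : ∀ i j k, s i j k = s j i k)
    (h₂ : ∀ i j k, s i j k = s i k j) (U : Finset ι) :
    ∑ m, (sliceSqRepeated s m + sliceSqDistinct s U m) ≤ ∑ i, ∑ j, ∑ k, s i j k ^ 2 := by
  rw [sum_sq_eq_sum_slice h₁ h₂]
  refine sum_le_sum fun m _ => add_le_add le_rfl ?_
  have hnonneg (i j : ι) : 0 ≤ if i ≠ j ∧ i ≠ m ∧ j ≠ m then s i j m ^ 2 else 0 := by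
    split_ifs <;> positivity
  exact (sum_le_sum fun i _ => sum_le_univ_sum_of_nonneg (hnonneg i)).trans
    (sum_le_univ_sum_of_nonneg fun i => sum_nonneg fun j _ => hnonneg i j)

theorem trace_sq_le_of_notMem (h₁ : ∀ i j k, s i j k = s j i k) {a b c d m : ι}
    (hab : a ≠ b) (hac : a ≠ c) (had : a ≠ d) (hbc : b ≠ c) (hbd : b ≠ d) (hcd : c ≠ d)
    (hm : m ∉ ({a, b, c, d} : Finset ι)) :
    6 / (2 * Fintype.card ι + 3) * (∑ j, s j j m) ^ 2
      ≤ sliceSqRepeated s m + sliceSqDistinct s {a, b, c, d} m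
        + 2 * gaussSlice s a b a b m + 2 * gaussSlice s a b c d m := by
  simp only [mem_insert, mem_singleton, not_or] at hm
  obtain ⟨hma, hmb, hmc, hmd⟩ := hm
  have hL := mul_sq_sum_le_of_pair (fun j => s j j m) hma hmb hab
  simp only [sum_four _ hab hac had hbc hbd hcd, sliceSqRepeated, sliceSqDistinct, gaussSlice]
  simp only [ne_eq, hab, hac, had, hbc, hbd, hcd, hab.symm, hac.symm, had.symm, hbc.symm,
    hbd.symm, hcd.symm, Ne.symm hma, Ne.symm hmb, Ne.symm hmc, Ne.symm hmd, not_true_eq_false,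
    not_false_eq_true, and_self, and_true, ↓reduceIte, add_zero, zero_add]
  simp only [h₁ b a, h₁ c a, h₁ d a, h₁ c b, h₁ d b, h₁ d c] at hL ⊢
  linarith [sq_nonneg (s a c m + s b d m), sq_nonneg (s a d m - s b c m),
    sq_nonneg (s a a m - s b b m), sq_nonneg (s a c m), sq_nonneg (s a d m),
    sq_nonneg (s b c m), sq_nonneg (s b d m), sq_nonneg (s c d m)]

theorem sum_four_trace_sq_le (h₁ : ∀ i j k, s i j k = s j i k)
    (h₂ : ∀ i j k, s i j k = s i k j) {a b c d : ι}
    (hab : a ≠ b) (hac : a ≠ c) (had : a ≠ d) (hbc : b ≠ c) (hbd : b ≠ d) (hcd : c ≠ d) :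
    ∑ m ∈ {a, b, c, d}, 6 / (2 * Fintype.card ι + 3) * (∑ j, s j j m) ^ 2
      ≤ ∑ m ∈ {a, b, c, d}, (sliceSqRepeated s m + sliceSqDistinct s {a, b, c, d} m
        + 2 * gaussSlice s a b a b m + 2 * gaussSlice s a b c d m) := by
  have hLa := mul_sq_sum_le_of_two_pairs (fun j => s j j a) hab hac had hbc hbd hcd
  have hLb := mul_sq_sum_le_of_two_pairs (fun j => s j j b) hab.symm hbc hbd hac had hcd
  have hLc := mul_sq_sum_le_of_pair (fun j => s j j c) hac.symm hbc.symm hab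
  have hLd := mul_sq_sum_le_of_pair (fun j => s j j d) had.symm hbd.symm hab
  simp only [sum_four _ hab hac had hbc hbd hcd, sliceSqRepeated, sliceSqDistinct, gaussSlice]
  simp only [ne_eq, hab, hac, had, hbc, hbd, hcd, hab.symm, hac.symm, had.symm, hbc.symm,
    hbd.symm, hcd.symm, not_true_eq_false, not_false_eq_true, and_self, and_true, and_false,
    ↓reduceIte, add_zero, zero_add]
  -- Sort the indices of every entry into the order `a, b, c, d`.
  simp only [h₁ b a, h₁ c a, h₁ d a, h₁ c b, h₁ d b, h₁ d c, (h₂ · b a), (h₂ · c a), (h₂ · d a),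
    (h₂ · c b), (h₂ · d b), (h₂ · d c)] at hLa hLb hLc hLd ⊢
  linarith [sq_nonneg (4 * s a b c + (s b b d - s a a d)),
    sq_nonneg (4 * s a b d + (s a a c - s b b c)),
    sq_nonneg (6 * s a c d + (s b d d - s b c c)), sq_nonneg (6 * s b c d + (s a c c - s a d d))]

theorem mul_sum_trace_sq_le (h₁ : ∀ i j k, s i j k = s j i k)
    (h₂ : ∀ i j k, s i j k = s i k j) {a b c d : ι}
    (hab : a ≠ b) (hac : a ≠ c) (had : a ≠ d) (hbc : b ≠ c) (hbd : b ≠ d) (hcd : c ≠ d) :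
    6 / (2 * Fintype.card ι + 3) * ∑ m, (∑ j, s j j m) ^ 2
      ≤ ∑ i, ∑ j, ∑ k, s i j k ^ 2 + 2 * ∑ m, gaussSlice s a b a b m
        + 2 * ∑ m, gaussSlice s a b c d m := by
  set U : Finset ι := {a, b, c, d}
  calc 6 / (2 * Fintype.card ι + 3) * ∑ m, (∑ j, s j j m) ^ 2
      = ∑ m ∈ U, 6 / (2 * Fintype.card ι + 3) * (∑ j, s j j m) ^ 2
        + ∑ m ∈ Uᶜ, 6 / (2 * Fintype.card ι + 3) * (∑ j, s j j m) ^ 2 := by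
        rw [mul_sum, sum_add_sum_compl]
    _ ≤ ∑ m ∈ U, (sliceSqRepeated s m + sliceSqDistinct s U m
          + 2 * gaussSlice s a b a b m + 2 * gaussSlice s a b c d m)
        + ∑ m ∈ Uᶜ, (sliceSqRepeated s m + sliceSqDistinct s U m
          + 2 * gaussSlice s a b a b m + 2 * gaussSlice s a b c d m) :=
        add_le_add (sum_four_trace_sq_le h₁ h₂ hab hac had hbc hbd hcd)
          (sum_le_sum fun m hm => trace_sq_le_of_notMem h₁ hab hac had hbc hbd hcd
            (mem_compl.1 hm))
    _ ≤ ∑ i, ∑ j, ∑ k, s i j k ^ 2 + 2 * ∑ m, gaussSlice s a b a b m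
        + 2 * ∑ m, gaussSlice s a b c d m := by
        rw [sum_add_sum_compl, sum_add_distrib, sum_add_distrib, ← mul_sum, ← mul_sum]
        linarith [sum_slice_le_sum_sq h₁ h₂ U]

end SymmetricTensor

open scoped RealInnerProductSpace

/-- Lemma 3.4: for a symmetric trilinear form `σ` on `ℝⁿ` (`n ≥ 4`), with
`Hⁱ = Σ_j σ_jji` and Gauss-type tensor `R̃_ijkl = Σ_m (σ_ikm σ_jlm - σ_ilm σ_jkm)`,
one has `R̃₁₂₁₂ + R̃₁₂₃₄ ≥ (1/2)[(6/(2n+3)) Σ (Hⁱ)² - Σ σ_ijk²]`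
for every orthonormal frame. -/
theorem stmt_1 {n : ℕ} (hn : 4 ≤ n)
    (T : EuclideanSpace ℝ (Fin n) →ₗ[ℝ] EuclideanSpace ℝ (Fin n) →ₗ[ℝ]
      EuclideanSpace ℝ (Fin n) →ₗ[ℝ] ℝ)
    (hT1 : ∀ x y z, T x y z = T y x z)
    (hT2 : ∀ x y z, T x y z = T x z y)
    (e : Fin n → EuclideanSpace ℝ (Fin n)) :
    let σ : Fin n → Fin n → Fin n → ℝ := fun i j k => T (e i) (e j) (e k)
    let H : Fin n → ℝ := fun i => ∑ j, σ j j i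
    let Rt : Fin n → Fin n → Fin n → Fin n → ℝ :=
      fun i j k l => ∑ m, (σ i k m * σ j l m - σ i l m * σ j k m)
    let i₁ : Fin n := ⟨0, by omega⟩
    let i₂ : Fin n := ⟨1, by omega⟩
    let i₃ : Fin n := ⟨2, by omega⟩
    let i₄ : Fin n := ⟨3, by omega⟩
    (1 / 2 : ℝ) * ((6 / (2 * (n : ℝ) + 3)) * ∑ i, (H i) ^ 2
        - ∑ i, ∑ j, ∑ k, (σ i j k) ^ 2)
      ≤ Rt i₁ i₂ i₁ i₂ + Rt i₁ i₂ i₃ i₄ := by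
  intro σ H Rt i₁ i₂ i₃ i₄
  have key : 6 / (2 * (n : ℝ) + 3) * ∑ i, H i ^ 2
      ≤ ∑ i, ∑ j, ∑ k, σ i j k ^ 2 + 2 * Rt i₁ i₂ i₁ i₂ + 2 * Rt i₁ i₂ i₃ i₄ := by
    have h := mul_sum_trace_sq_le (s := σ) (fun _ _ _ => hT1 _ _ _) (fun _ _ _ => hT2 _ _ _)
      (a := i₁) (b := i₂) (c := i₃) (d := i₄) (by simp [i₁, i₂, Fin.ext_iff])
      (by simp [i₁, i₃, Fin.ext_iff]) (by simp [i₁, i₄, Fin.ext_iff])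
      (by simp [i₂, i₃, Fin.ext_iff]) (by simp [i₂, i₄, Fin.ext_iff])
      (by simp [i₃, i₄, Fin.ext_iff])
    rwa [Fintype.card_fin] at h
  linarith
end

section
/- Let M be an n-dimensional Legendrian submanifold of a (2n+1)-dimensional Sasaki manifold (N, φ, ξ, η, ḡ). Then the second fundamental form B and mean curvature vector H satisfy |B|² ≥ (3/(n+2))|H|². -/
/-!
At a point `p`, the numbers `σ i j k = ⟪B(eᵢ, eⱼ), φ eₖ⟫` form a totally symmetric cubic form:
symmetry in `i, j` is torsion-freeness, and symmetry in `j, k` comes from differentiating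
`⟪eⱼ, φ eₖ⟫ = 0` with the Sasaki formula for `∇̄φ`. Differentiating `⟪eⱼ, ξ⟫ = 0` shows that `B`
is orthogonal to `ξ`, so since `(eᵢ, φ eₖ, ξ)` is an orthonormal basis of the ambient space,
`|H|² = Σₖ (Σᵢ σ i i k)²`, while Bessel gives `|B|² ≥ Σ σ²`. For a symmetric cubic form with
trace `T`, `3 |T|² ≤ (n + 2) |σ|²` follows by expanding `|(n + 2) σ - b|² ≥ 0`, where `b` is the
symmetrization of `δ ⊗ T`.
-/

open Finset
open scoped RealInnerProductSpace

section SymmetricCubicForm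

variable {ι : Type*} [Fintype ι] [DecidableEq ι]

def symmDelta (T : ι → ℝ) (i j k : ι) : ℝ :=
  (if i = j then T k else 0) + (if j = k then T i else 0) + (if i = k then T j else 0)

theorem sum_sq_symmDelta (T : ι → ℝ) :
    ∑ i, ∑ j, ∑ k, symmDelta T i j k ^ 2 = 3 * (Fintype.card ι + 2) * ∑ k, T k ^ 2 := by
  simp only [symmDelta, add_sq, mul_add, add_mul, ite_pow, ite_mul, mul_ite, mul_zero, zero_mul,
    ne_eq, OfNat.ofNat_ne_zero, not_false_eq_true, zero_pow, sum_add_distrib, sum_ite_eq,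
    sum_ite_eq', mem_univ, if_true, sum_ite_irrel, sum_const_zero, sum_const, card_univ,
    nsmul_eq_mul, mul_assoc, ← pow_two, ← mul_sum]
  ring

theorem three_mul_sum_sq_trace_le (σ : ι → ι → ι → ℝ) (h₁₂ : ∀ i j k, σ j i k = σ i j k)
    (h₂₃ : ∀ i j k, σ i k j = σ i j k) :
    3 * ∑ k, (∑ i, σ i i k) ^ 2 ≤ (Fintype.card ι + 2) * ∑ i, ∑ j, ∑ k, σ i j k ^ 2 := by
  set T : ι → ℝ := fun k => ∑ i, σ i i k
  have hσb : ∑ i, ∑ j, ∑ k, σ i j k * symmDelta T i j k = 3 * ∑ k, T k ^ 2 := by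
    have hT : ∀ i, ∑ j, σ i j j = T i := fun i => sum_congr rfl fun j _ => by rw [h₁₂, h₂₃]
    have hT' : ∑ i, ∑ j, σ i i j * T j = ∑ k, T k ^ 2 := by
      rw [sum_comm]; simp only [← sum_mul, T, sq]
    simp only [symmDelta, mul_add, mul_ite, mul_zero, sum_add_distrib, sum_ite_eq, mem_univ,
      if_true, sum_ite_irrel, sum_const_zero, h₂₃, ← sum_mul, hT, hT', ← sq]
    ring
  have hsos : 0 ≤ ∑ i, ∑ j, ∑ k, ((Fintype.card ι + 2) * σ i j k - symmDelta T i j k) ^ 2 := by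
    positivity
  simp only [sub_sq, mul_pow, sum_add_distrib, sum_sub_distrib, ← mul_sum, mul_assoc, hσb,
    sum_sq_symmDelta] at hsos
  nlinarith

end SymmetricCubicForm

section InnerProductSpace

variable {E : Type*} [NormedAddCommGroup E] [InnerProductSpace ℝ E]

theorem Orthonormal.sum_elim {ι κ : Type*} {v : ι → E} {w : κ → E} (hv : Orthonormal ℝ v)
    (hw : Orthonormal ℝ w) (hvw : ∀ i j, ⟪v i, w j⟫ = 0) : Orthonormal ℝ (Sum.elim v w) := by
  classical
  rw [orthonormal_iff_ite] at hv hw ⊢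
  rintro (i | j) (i' | j')
  · simpa using hv i i'
  · simpa using hvw i j'
  · simpa [real_inner_comm] using hvw i' j
  · simpa using hw j j'

theorem orthonormal_const_unit {ξ : E} (hξ : ‖ξ‖ = 1) : Orthonormal ℝ fun _ : Unit => ξ := by
  classical
  rw [orthonormal_iff_ite]
  simp [hξ]

theorem Orthonormal.sum_sq_inner_eq_norm_sq [FiniteDimensional ℝ E] {ι : Type*} [Fintype ι]
    {v : ι → E} (hv : Orthonormal ℝ v) (hcard : Fintype.card ι = Module.finrank ℝ E) (x : E) :
    ∑ i, ⟪x, v i⟫ ^ 2 = ‖x‖ ^ 2 := by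
  have hsp := (hv.linearIndependent.span_eq_top_of_card_eq_finrank' hcard).ge
  simpa [OrthonormalBasis.coe_mk] using (OrthonormalBasis.mk hv hsp).sum_sq_inner_left x

end InnerProductSpace

section AlmostContactStructure

variable {E : Type*} [NormedAddCommGroup E] [InnerProductSpace ℝ E] {φ : E →ₗ[ℝ] E} {ξ : E}

theorem inner_phi_xi_eq_zero (hφξ : φ ξ = 0) (hskew : ∀ x y, ⟪φ x, y⟫ + ⟪x, φ y⟫ = 0) (x : E) :
    ⟪φ x, ξ⟫ = 0 := by
  simpa [hφξ] using hskew x ξ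

theorem inner_phi_phi (hφ2 : ∀ x, φ (φ x) = -x + ⟪x, ξ⟫ • ξ)
    (hskew : ∀ x y, ⟪φ x, y⟫ + ⟪x, φ y⟫ = 0) (x y : E) :
    ⟪φ x, φ y⟫ = ⟪x, y⟫ - ⟪x, ξ⟫ * ⟪y, ξ⟫ := by
  have h := hskew x (φ y)
  rw [hφ2, inner_add_right, inner_neg_right, inner_smul_right] at h
  linarith [real_inner_comm x ξ]

theorem Orthonormal.phi_comp {ι : Type*} {e : ι → E} (he : Orthonormal ℝ e)
    (hφ2 : ∀ x, φ (φ x) = -x + ⟪x, ξ⟫ • ξ) (hskew : ∀ x y, ⟪φ x, y⟫ + ⟪x, φ y⟫ = 0)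
    (heξ : ∀ i, ⟪e i, ξ⟫ = 0) : Orthonormal ℝ fun i => φ (e i) := by
  classical
  rw [orthonormal_iff_ite] at he ⊢
  intro i j
  rw [inner_phi_phi hφ2 hskew, heξ, zero_mul, sub_zero, he]

theorem norm_sq_eq_sum_sq_inner_phi_of_inner_eq_zero [FiniteDimensional ℝ E] {ι : Type*}
    [Fintype ι] (hdim : Module.finrank ℝ E = 2 * Fintype.card ι + 1) {e : ι → E}
    (he : Orthonormal ℝ e) (hξ : ‖ξ‖ = 1) (hφξ : φ ξ = 0)
    (hφ2 : ∀ x, φ (φ x) = -x + ⟪x, ξ⟫ • ξ) (hskew : ∀ x y, ⟪φ x, y⟫ + ⟪x, φ y⟫ = 0)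
    (heξ : ∀ i, ⟪e i, ξ⟫ = 0) (heφ : ∀ i j, ⟪φ (e i), e j⟫ = 0)
    {v : E} (hve : ∀ i, ⟪v, e i⟫ = 0) (hvξ : ⟪v, ξ⟫ = 0) :
    ‖v‖ ^ 2 = ∑ k, ⟪v, φ (e k)⟫ ^ 2 := by
  have hframe : Orthonormal ℝ (Sum.elim e (Sum.elim (fun k => φ (e k)) fun _ : Unit => ξ)) :=
    he.sum_elim ((he.phi_comp hφ2 hskew heξ).sum_elim (orthonormal_const_unit hξ)
        fun k _ => inner_phi_xi_eq_zero hφξ hskew (e k))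
      fun i => Sum.rec (fun j => by rw [real_inner_comm]; exact heφ j i) fun _ => heξ i
  have hcard : Fintype.card (ι ⊕ ι ⊕ Unit) = Module.finrank ℝ E := by
    simp only [Fintype.card_sum, Fintype.card_unit, hdim]; ring
  rw [← hframe.sum_sq_inner_eq_norm_sq hcard]
  simp [Fintype.sum_sum_type, hve, hvξ]

end AlmostContactStructure

section Submanifold

variable {E : Type*} [NormedAddCommGroup E] [InnerProductSpace ℝ E] {M : Type*}
  {Tang : M → Submodule ℝ E} {conn : (M → E) → (M → E) → (M → E)}
  [FiniteDimensional ℝ E]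

variable (Tang conn) in
noncomputable def secondFundamentalForm (U V : M → E) (p : M) : E :=
  (Tang p)ᗮ.starProjection (conn U V p)

theorem secondFundamentalForm_mem_orthogonal (U V : M → E) (p : M) :
    secondFundamentalForm Tang conn U V p ∈ (Tang p)ᗮ :=
  Submodule.starProjection_apply_mem _ _

theorem inner_secondFundamentalForm_of_mem_orthogonal {U V : M → E} {p : M} {w : E}
    (hw : w ∈ (Tang p)ᗮ) : ⟪secondFundamentalForm Tang conn U V p, w⟫ = ⟪conn U V p, w⟫ := by
  rw [secondFundamentalForm, Submodule.inner_starProjection_left_eq_right,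
    Submodule.starProjection_eq_self_iff.mpr hw]

theorem secondFundamentalForm_comm
    (htors : ∀ X Y : M → E, (∀ p, X p ∈ Tang p) → (∀ p, Y p ∈ Tang p) →
      ∀ p, conn X Y p - conn Y X p ∈ Tang p)
    {X Y : M → E} (hX : ∀ p, X p ∈ Tang p) (hY : ∀ p, Y p ∈ Tang p) (p : M) :
    secondFundamentalForm Tang conn X Y p = secondFundamentalForm Tang conn Y X p := by
  rw [← sub_eq_zero, secondFundamentalForm, secondFundamentalForm, ← map_sub]
  exact Submodule.starProjection_orthogonal_apply_eq_zero (htors X Y hX hY p)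

end Submanifold

section MetricConnection

variable {E : Type*} [NormedAddCommGroup E] [InnerProductSpace ℝ E] {M : Type*}
  {Tang : M → Submodule ℝ E} {D : (M → E) → (M → ℝ) → (M → ℝ)}
  {conn : (M → E) → (M → E) → (M → E)} {φ : M → E →ₗ[ℝ] E} {ξ : M → E}

theorem inner_conn_add_inner_conn_eq_zero
    (hD0 : ∀ X : M → E, D X (fun _ => (0 : ℝ)) = fun _ => 0)
    (hcompat : ∀ X Y Z : M → E,
      D X (fun p => ⟪Y p, Z p⟫) = fun p => ⟪conn X Y p, Z p⟫ + ⟪Y p, conn X Z p⟫)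
    (X : M → E) {Y Z : M → E} (hYZ : ∀ q, ⟪Y q, Z q⟫ = 0) (p : M) :
    ⟪conn X Y p, Z p⟫ + ⟪Y p, conn X Z p⟫ = 0 := by
  have h := congrFun (hcompat X Y Z) p
  rwa [funext hYZ, hD0, eq_comm] at h

theorem inner_conn_xi_eq_zero (hD0 : ∀ X : M → E, D X (fun _ => (0 : ℝ)) = fun _ => 0)
    (hcompat : ∀ X Y Z : M → E,
      D X (fun p => ⟪Y p, Z p⟫) = fun p => ⟪conn X Y p, Z p⟫ + ⟪Y p, conn X Z p⟫)
    (hconnξ : ∀ X : M → E, conn X ξ = fun p => -(φ p (X p)))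
    (hLeg : ∀ p, ∀ v ∈ Tang p, ⟪v, ξ p⟫ = 0)
    (hLegφ : ∀ p, ∀ v ∈ Tang p, ∀ w ∈ Tang p, ⟪φ p v, w⟫ = 0)
    {X Y : M → E} (hX : ∀ p, X p ∈ Tang p) (hY : ∀ p, Y p ∈ Tang p) (p : M) :
    ⟪conn X Y p, ξ p⟫ = 0 := by
  have h := inner_conn_add_inner_conn_eq_zero hD0 hcompat X (fun q => hLeg q _ (hY q)) p
  rwa [hconnξ, inner_neg_right, real_inner_comm (φ p (X p)), hLegφ p _ (hX p) _ (hY p),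
    neg_zero, add_zero] at h

theorem inner_conn_phi_comm (hD0 : ∀ X : M → E, D X (fun _ => (0 : ℝ)) = fun _ => 0)
    (hcompat : ∀ X Y Z : M → E,
      D X (fun p => ⟪Y p, Z p⟫) = fun p => ⟪conn X Y p, Z p⟫ + ⟪Y p, conn X Z p⟫)
    (hskew : ∀ p x y, ⟪φ p x, y⟫ + ⟪x, φ p y⟫ = 0)
    (hconnφ : ∀ X Y : M → E, conn X (fun p => φ p (Y p))
      = fun p => φ p (conn X Y p) + ⟪X p, Y p⟫ • ξ p - ⟪Y p, ξ p⟫ • X p)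
    (hLeg : ∀ p, ∀ v ∈ Tang p, ⟪v, ξ p⟫ = 0)
    (hLegφ : ∀ p, ∀ v ∈ Tang p, ∀ w ∈ Tang p, ⟪φ p v, w⟫ = 0)
    (X : M → E) {Y Z : M → E} (hY : ∀ p, Y p ∈ Tang p) (hZ : ∀ p, Z p ∈ Tang p) (p : M) :
    ⟪conn X Y p, φ p (Z p)⟫ = ⟪conn X Z p, φ p (Y p)⟫ := by
  have h := inner_conn_add_inner_conn_eq_zero (Z := fun q => φ q (Z q)) hD0 hcompat X
    (fun q => by rw [real_inner_comm]; exact hLegφ q _ (hZ q) _ (hY q)) p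
  rw [hconnφ, inner_sub_right, inner_add_right, inner_smul_right, inner_smul_right,
    hLeg p _ (hY p), hLeg p _ (hZ p)] at h
  linarith [hskew p (Y p) (conn X Z p), real_inner_comm (φ p (Y p)) (conn X Z p)]

end MetricConnection

theorem stmt_6_general {E : Type*} [NormedAddCommGroup E] [InnerProductSpace ℝ E]
    [FiniteDimensional ℝ E] {M : Type*} {n : ℕ}
    (hdim : Module.finrank ℝ E = 2 * n + 1)
    (Tang : M → Submodule ℝ E)
    (D : (M → E) → (M → ℝ) → (M → ℝ))
    (conn : (M → E) → (M → E) → (M → E))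
    (hD0 : ∀ X : M → E, D X (fun _ => (0 : ℝ)) = fun _ => 0)
    (hcompat : ∀ X Y Z : M → E,
      D X (fun p => ⟪Y p, Z p⟫) = fun p => ⟪conn X Y p, Z p⟫ + ⟪Y p, conn X Z p⟫)
    (htors : ∀ X Y : M → E, (∀ p, X p ∈ Tang p) → (∀ p, Y p ∈ Tang p) →
      ∀ p, conn X Y p - conn Y X p ∈ Tang p)
    (φ : M → E →ₗ[ℝ] E) (ξ : M → E)
    (hξunit : ∀ p, ‖ξ p‖ = 1)
    (hφξ : ∀ p, φ p (ξ p) = 0)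
    (hφ2 : ∀ p x, φ p (φ p x) = -x + ⟪x, ξ p⟫ • ξ p)
    (hskew : ∀ p x y, ⟪φ p x, y⟫ + ⟪x, φ p y⟫ = 0)
    (hconnξ : ∀ X : M → E, conn X ξ = fun p => -(φ p (X p)))
    (hconnφ : ∀ X Y : M → E, conn X (fun p => φ p (Y p))
      = fun p => φ p (conn X Y p) + ⟪X p, Y p⟫ • ξ p - ⟪Y p, ξ p⟫ • X p)
    (hLeg : ∀ p, ∀ v ∈ Tang p, ⟪v, ξ p⟫ = 0)
    (hLegφ : ∀ p, ∀ v ∈ Tang p, ∀ w ∈ Tang p, ⟪φ p v, w⟫ = 0)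
    (e : Fin n → M → E)
    (he_t : ∀ i p, e i p ∈ Tang p)
    (he_on : ∀ p, Orthonormal ℝ (fun i => e i p)) :
    let B : (M → E) → (M → E) → M → E := fun U V p =>
      conn U V p - (Submodule.orthogonalProjectionOnto (Tang p) (conn U V p) : E)
    ∀ p, (3 / ((n : ℝ) + 2)) * ‖∑ i, B (e i) (e i) p‖ ^ 2
      ≤ ∑ i, ∑ j, ‖B (e i) (e j) p‖ ^ 2 := by
  intro B p
  set sff := secondFundamentalForm Tang conn
  have hB : ∀ U V, B U V p = sff U V p := fun U V =>
    (Submodule.starProjection_orthogonal_val _).symm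
  simp only [hB]
  have hφe : ∀ k, φ p (e k p) ∈ (Tang p)ᗮ := fun k => (Submodule.mem_orthogonal _ _).2
    fun u hu => by rw [real_inner_comm]; exact hLegφ p _ (he_t k p) _ hu
  have hξ : ξ p ∈ (Tang p)ᗮ := (Submodule.mem_orthogonal _ _).2 fun u hu => hLeg p u hu
  set σ : Fin n → Fin n → Fin n → ℝ := fun i j k => ⟪sff (e i) (e j) p, φ p (e k p)⟫
  have h₁₂ : ∀ i j k, σ j i k = σ i j k := fun i j k => by
    simp only [σ, sff, secondFundamentalForm_comm htors (he_t j) (he_t i)]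
  have h₂₃ : ∀ i j k, σ i k j = σ i j k := fun i j k => by
    simp only [σ, sff, inner_secondFundamentalForm_of_mem_orthogonal (hφe _)]
    exact inner_conn_phi_comm hD0 hcompat hskew hconnφ hLeg hLegφ _ (he_t k) (he_t j) p
  have hH : ‖∑ i, sff (e i) (e i) p‖ ^ 2 = ∑ k, (∑ i, σ i i k) ^ 2 := by
    simp only [σ, ← sum_inner]
    refine norm_sq_eq_sum_sq_inner_phi_of_inner_eq_zero (by rwa [Fintype.card_fin]) (he_on p)
      (hξunit p) (hφξ p) (hφ2 p) (hskew p) (fun i => hLeg p _ (he_t i p))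
      (fun i j => hLegφ p _ (he_t i p) _ (he_t j p)) (fun l => ?_) ?_
    · exact Submodule.inner_left_of_mem_orthogonal (he_t l p)
        (sum_mem fun i _ => secondFundamentalForm_mem_orthogonal _ _ p)
    · rw [sum_inner]
      refine sum_eq_zero fun i _ => ?_
      rw [inner_secondFundamentalForm_of_mem_orthogonal hξ]
      exact inner_conn_xi_eq_zero hD0 hcompat hconnξ hLeg hLegφ (he_t i) (he_t i) p
  have hBessel : ∀ i j, ∑ k, σ i j k ^ 2 ≤ ‖sff (e i) (e j) p‖ ^ 2 := fun i j => by
    simpa [σ, real_inner_comm] using ((he_on p).phi_comp (hφ2 p) (hskew p)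
      (fun i => hLeg p _ (he_t i p))).sum_inner_products_le (s := univ) (sff (e i) (e j) p)
  calc 3 / ((n : ℝ) + 2) * ‖∑ i, sff (e i) (e i) p‖ ^ 2
      = (3 * ∑ k, (∑ i, σ i i k) ^ 2) / ((n : ℝ) + 2) := by rw [hH]; ring
    _ ≤ ∑ i, ∑ j, ∑ k, σ i j k ^ 2 := by
      rw [div_le_iff₀ (by positivity), mul_comm _ ((n : ℝ) + 2)]
      simpa using three_mul_sum_sq_trace_le σ h₁₂ h₂₃
    _ ≤ ∑ i, ∑ j, ‖sff (e i) (e j) p‖ ^ 2 := sum_le_sum fun i _ => sum_le_sum fun j _ => hBessel i j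

/-- Proposition 2.5: for an `n`-dimensional Legendrian submanifold `M` of a
`(2n+1)`-dimensional Sasaki manifold `(N, φ, ξ, η, ḡ)` (axiomatized: ambient
vector fields along `M` are maps `M → E`, `conn` a torsion-free metric connection
with directional derivative `D`, Sasaki structure equations for `φ` and `ξ`, and
`M` Legendrian, i.e. `TM ⊥ ξ` and `φ(TM) ⊥ TM`), the second fundamental form
`B(X,Y) = (∇̄_X Y)^⊥` and mean curvature vector `H = Σᵢ B(eᵢ,eᵢ)` satisfy
`|B|² ≥ (3/(n+2))|H|²` at every point. -/
theorem stmt_6 {E : Type*} [NormedAddCommGroup E] [InnerProductSpace ℝ E]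
    [FiniteDimensional ℝ E] {M : Type*} {n : ℕ}
    (hdim : Module.finrank ℝ E = 2 * n + 1)
    (Tang : M → Submodule ℝ E)
    (hTdim : ∀ p, Module.finrank ℝ (Tang p) = n)
    (D : (M → E) → (M → ℝ) → (M → ℝ))
    (conn : (M → E) → (M → E) → (M → E))
    (hD0 : ∀ X : M → E, D X (fun _ => (0 : ℝ)) = fun _ => 0)
    (hcompat : ∀ X Y Z : M → E,
      D X (fun p => ⟪Y p, Z p⟫) = fun p => ⟪conn X Y p, Z p⟫ + ⟪Y p, conn X Z p⟫)
    (htors : ∀ X Y : M → E, (∀ p, X p ∈ Tang p) → (∀ p, Y p ∈ Tang p) →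
      ∀ p, conn X Y p - conn Y X p ∈ Tang p)
    (φ : M → E →ₗ[ℝ] E) (ξ : M → E)
    (hξunit : ∀ p, ‖ξ p‖ = 1)
    (hφξ : ∀ p, φ p (ξ p) = 0)
    (hφ2 : ∀ p x, φ p (φ p x) = -x + ⟪x, ξ p⟫ • ξ p)
    (hskew : ∀ p x y, ⟪φ p x, y⟫ + ⟪x, φ p y⟫ = 0)
    (hconnξ : ∀ X : M → E, conn X ξ = fun p => -(φ p (X p)))
    (hconnφ : ∀ X Y : M → E, conn X (fun p => φ p (Y p))
      = fun p => φ p (conn X Y p) + ⟪X p, Y p⟫ • ξ p - ⟪Y p, ξ p⟫ • X p)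
    (hLeg : ∀ p, ∀ v ∈ Tang p, ⟪v, ξ p⟫ = 0)
    (hLegφ : ∀ p, ∀ v ∈ Tang p, ∀ w ∈ Tang p, ⟪φ p v, w⟫ = 0)
    (e : Fin n → M → E)
    (he_t : ∀ i p, e i p ∈ Tang p)
    (he_on : ∀ p, Orthonormal ℝ (fun i => e i p)) :
    let B : (M → E) → (M → E) → M → E := fun U V p =>
      conn U V p - (Submodule.orthogonalProjectionOnto (Tang p) (conn U V p) : E)
    ∀ p, (3 / ((n : ℝ) + 2)) * ‖∑ i, B (e i) (e i) p‖ ^ 2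
      ≤ ∑ i, ∑ j, ‖B (e i) (e j) p‖ ^ 2 :=
  stmt_6_general hdim Tang D conn hD0 hcompat htors φ ξ hξunit hφξ hφ2 hskew hconnξ hconnφ hLeg
    hLegφ e he_t he_on
end

section
/- Let N be a Kähler manifold whose holomorphic sectional curvatures satisfy K̃_min ≤ K(X) ≤ K̃_max for all unit X. If M ⊂ N is a Lagrangian submanifold, then for any orthonormal tangent vectors X, Y to M, the ambient sectional curvature satisfies (3/4)K̃_min - (1/2)K̃_max ≤ K(X,Y) ≤ (3/4)K̃_max - (1/2)K̃_min. -/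
/-!
For a Kähler curvature tensor the sectional curvature is recovered from the holomorphic one
`H z = K z (J z) z (J z)` by the polarization identity
`32 K(X,Y,X,Y) = 3 (H(X + JY) + H(X - JY)) - (H(X + Y) + H(X - Y)) - 4 H X - 4 H Y`.
For orthonormal `X, Y` with `⟪X, JY⟫ = 0` the four vectors `X ± Y`, `X ± JY` have norm `√2`, so
`H` lies in `[4 K̃min, 4 K̃max]` on each of them; bounding every term of the identity gives
`32 K(X,Y,X,Y) ≥ 24 K̃min - 16 K̃max` and the symmetric upper bound.
-/

open scoped RealInnerProductSpace

structure IsKahlerCurvature {R E : Type*} [CommRing R] [AddCommGroup E] [Module R E]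
    (J : E →ₗ[R] E) (K : E →ₗ[R] E →ₗ[R] E →ₗ[R] E →ₗ[R] R) : Prop where
  antisymm_left : ∀ x y z w, K x y z w = - K y x z w
  antisymm_right : ∀ x y z w, K x y z w = - K x y w z
  pair_symm : ∀ x y z w, K x y z w = K z w x y
  bianchi : ∀ x y z w, K x y z w + K y z x w + K z x y w = 0
  apply_J_J : ∀ x y z w, K (J x) (J y) z w = K x y z w

/-- Unnormalized holomorphic sectional curvature: `holSec J K x = ‖x‖ ^ 4 * K(x)` in the
notation of the paper. -/
def holSec {R E : Type*} [CommRing R] [AddCommGroup E] [Module R E]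
    (J : E →ₗ[R] E) (K : E →ₗ[R] E →ₗ[R] E →ₗ[R] E →ₗ[R] R) (x : E) : R :=
  K x (J x) x (J x)

section Algebra

variable {R E : Type*} [CommRing R] [AddCommGroup E] [Module R E]
  {J : E →ₗ[R] E} {K : E →ₗ[R] E →ₗ[R] E →ₗ[R] E →ₗ[R] R}

/-- `map_sub` does not apply to `K` itself: instance search does not find the `AddCommGroup`
structure on the codomain `E →ₗ[R] E →ₗ[R] E →ₗ[R] R`. -/
theorem LinearMap.sub_apply₄ (a b c d e : E) :
    K (a - b) c d e = K a c d e - K b c d e := by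
  rw [eq_sub_iff_add_eq, ← LinearMap.add_apply, ← LinearMap.add_apply, ← LinearMap.add_apply,
    ← map_add, sub_add_cancel]

theorem holSec_smul (c : R) (x : E) : holSec J K (c • x) = c ^ 4 * holSec J K x := by
  simp only [holSec, map_smul, LinearMap.smul_apply, smul_eq_mul]
  ring

namespace IsKahlerCurvature

variable (hK : IsKahlerCurvature J K) (hJ : ∀ x, J (J x) = -x)
include hK

theorem apply_apply_J_J (x y z w : E) : K x y (J z) (J w) = K x y z w := by
  rw [hK.pair_symm, hK.apply_J_J, hK.pair_symm]

include hJ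

theorem apply_J_left (x y z w : E) : K (J x) y z w = - K x (J y) z w := by
  simpa [hJ, neg_eq_iff_eq_neg] using hK.apply_J_J x (J y) z w

theorem apply_J_right (x y z w : E) : K x y z (J w) = - K x y (J z) w := by
  have h := hK.apply_apply_J_J x y z (J w)
  simp only [hJ, map_neg] at h
  linear_combination -h

theorem holSec_J (x : E) : holSec J K (J x) = holSec J K x := by
  simp only [holSec, hJ, map_neg, LinearMap.neg_apply, neg_neg]
  linear_combination hK.antisymm_left (J x) x (J x) x - hK.antisymm_right x (J x) (J x) x

theorem apply_J_apply_J_comm (x y : E) : K x (J y) y (J x) = K x (J y) x (J y) := by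
  rw [hK.apply_J_right hJ, hK.antisymm_right x (J y) (J y) x, neg_neg]

theorem apply_J_apply_J_symm (x y : E) : K y (J x) y (J x) = K x (J y) x (J y) := by
  rw [hK.antisymm_left, hK.apply_J_left hJ, neg_neg, hK.apply_J_apply_J_comm hJ]

theorem apply_J_apply_J_eq_add (x y : E) :
    K x (J x) y (J y) = K x y x y + K x (J y) x (J y) := by
  linear_combination hK.bianchi x (J x) y (J y) - hK.apply_J_left hJ x y x (J y)
    - hK.apply_apply_J_J y x x y - hK.antisymm_left y x x y

theorem holSec_add_add_holSec_sub (x y : E) :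
    holSec J K (x + y) + holSec J K (x - y) = 2 * holSec J K x + 2 * holSec J K y
      + 4 * K x (J x) y (J y) + 8 * K x (J y) x (J y) := by
  simp only [holSec, map_add, map_sub, LinearMap.add_apply, LinearMap.sub_apply,
    LinearMap.sub_apply₄]
  linear_combination 2 * hK.pair_symm y (J y) x (J x) + 2 * hK.pair_symm y (J x) x (J y)
    + 4 * hK.apply_J_apply_J_comm hJ x y + 2 * hK.apply_J_apply_J_symm hJ x y

theorem holSec_add_add_holSec_sub_J (x y : E) :
    holSec J K (x + J y) + holSec J K (x - J y) = 2 * holSec J K x + 2 * holSec J K y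
      + 4 * K x (J x) y (J y) + 8 * K x y x y := by
  rw [hK.holSec_add_add_holSec_sub hJ, hK.holSec_J hJ, hK.apply_J_right hJ, hJ]
  simp only [map_neg, LinearMap.neg_apply, neg_neg]

theorem polarization (x y : E) :
    32 * K x y x y = 3 * (holSec J K (x + J y) + holSec J K (x - J y))
      - (holSec J K (x + y) + holSec J K (x - y)) - 4 * holSec J K x - 4 * holSec J K y := by
  rw [hK.holSec_add_add_holSec_sub_J hJ, hK.holSec_add_add_holSec_sub hJ,
    hK.apply_J_apply_J_eq_add hJ]
  ring

end IsKahlerCurvature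

end Algebra

theorem holSec_mem_Icc_mul_norm_pow {F : Type*} [NormedAddCommGroup F] [NormedSpace ℝ F]
    {J : F →ₗ[ℝ] F} {K : F →ₗ[ℝ] F →ₗ[ℝ] F →ₗ[ℝ] F →ₗ[ℝ] ℝ} {Kmin Kmax : ℝ}
    (hpinch : ∀ x : F, ‖x‖ = 1 → holSec J K x ∈ Set.Icc Kmin Kmax) (z : F) :
    holSec J K z ∈ Set.Icc (Kmin * ‖z‖ ^ 4) (Kmax * ‖z‖ ^ 4) := by
  rcases eq_or_ne z 0 with rfl | hz
  · simp [holSec]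
  have hnorm : 0 < ‖z‖ := norm_pos_iff.mpr hz
  have hscale : holSec J K z = ‖z‖ ^ 4 * holSec J K (‖z‖⁻¹ • z) := by
    rw [← holSec_smul, smul_inv_smul₀ hnorm.ne']
  obtain ⟨hlo, hhi⟩ := hpinch (‖z‖⁻¹ • z) (norm_smul_inv_norm hz)
  rw [hscale]
  constructor <;> nlinarith [pow_pos hnorm 4]

theorem holSec_add_add_holSec_sub_mem_Icc {F : Type*} [NormedAddCommGroup F]
    [InnerProductSpace ℝ F] {J : F →ₗ[ℝ] F} {K : F →ₗ[ℝ] F →ₗ[ℝ] F →ₗ[ℝ] F →ₗ[ℝ] ℝ}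
    {Kmin Kmax : ℝ}
    (hpinch : ∀ x : F, ‖x‖ = 1 → holSec J K x ∈ Set.Icc Kmin Kmax)
    {u v : F} (hu : ‖u‖ = 1) (hv : ‖v‖ = 1) (huv : ⟪u, v⟫ = 0) :
    holSec J K (u + v) + holSec J K (u - v) ∈ Set.Icc (8 * Kmin) (8 * Kmax) := by
  have hadd : ‖u + v‖ ^ 4 = 4 := by
    rw [show 4 = 2 * 2 from rfl, pow_mul, norm_add_sq_real, hu, hv, huv]
    norm_num
  have hsub : ‖u - v‖ ^ 4 = 4 := by
    rw [show 4 = 2 * 2 from rfl, pow_mul, norm_sub_sq_real, hu, hv, huv]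
    norm_num
  obtain ⟨h₁, h₂⟩ := holSec_mem_Icc_mul_norm_pow hpinch (u + v)
  obtain ⟨h₃, h₄⟩ := holSec_mem_Icc_mul_norm_pow hpinch (u - v)
  rw [hadd] at h₁ h₂
  rw [hsub] at h₃ h₄
  constructor <;> linarith

/-- Sectional curvature bounds for Lagrangian directions in a Kähler manifold
(Proposition 4.1, first part): if the holomorphic sectional curvature lies in
`[K̃min, K̃max]`, then for orthonormal tangent vectors `X, Y` with `⟪X, JY⟫ = 0`
(the Lagrangian condition),
`(3/4)K̃min - (1/2)K̃max ≤ K(X,Y,X,Y) ≤ (3/4)K̃max - (1/2)K̃min`. -/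
theorem stmt_12 {E : Type*} [NormedAddCommGroup E] [InnerProductSpace ℝ E]
    (J : E →ₗ[ℝ] E)
    (hJ2 : ∀ x, J (J x) = -x)
    (hJorth : ∀ x y, ⟪J x, J y⟫ = ⟪x, y⟫)
    (K : E →ₗ[ℝ] E →ₗ[ℝ] E →ₗ[ℝ] E →ₗ[ℝ] ℝ)
    (hA1 : ∀ x y z w, K x y z w = - K y x z w)
    (hA2 : ∀ x y z w, K x y z w = - K x y w z)
    (hS : ∀ x y z w, K x y z w = K z w x y)
    (hBianchi : ∀ x y z w, K x y z w + K y z x w + K z x y w = 0)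
    (hKJ : ∀ x y z w, K (J x) (J y) z w = K x y z w)
    (Kmin Kmax : ℝ)
    (hpinch : ∀ x : E, ‖x‖ = 1 →
      Kmin ≤ K x (J x) x (J x) ∧ K x (J x) x (J x) ≤ Kmax)
    (X Y : E) (hX : ‖X‖ = 1) (hY : ‖Y‖ = 1) (hXY : ⟪X, Y⟫ = 0)
    (hLag : ⟪X, J Y⟫ = 0) :
    (3 / 4 : ℝ) * Kmin - (1 / 2 : ℝ) * Kmax ≤ K X Y X Y ∧
      K X Y X Y ≤ (3 / 4 : ℝ) * Kmax - (1 / 2 : ℝ) * Kmin := by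
  have hK : IsKahlerCurvature J K := ⟨hA1, hA2, hS, hBianchi, hKJ⟩
  have hJY : ‖J Y‖ = 1 := hY ▸ (J.isometryOfInner hJorth).norm_map Y
  have key := hK.polarization hJ2 X Y
  obtain ⟨hJlo, hJhi⟩ := holSec_add_add_holSec_sub_mem_Icc hpinch hX hJY hLag
  obtain ⟨hlo, hhi⟩ := holSec_add_add_holSec_sub_mem_Icc hpinch hX hY hXY
  obtain ⟨hXlo, hXhi⟩ : holSec J K X ∈ Set.Icc Kmin Kmax := hpinch X hX
  obtain ⟨hYlo, hYhi⟩ : holSec J K Y ∈ Set.Icc Kmin Kmax := hpinch Y hY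
  constructor <;> linarith
end

section
/- Let σ be a fully symmetric trilinear form on ℝⁿ with H_k := Σ_i σ_{iik}, μ_k := H_k/(n+2), trace-free part σ̊, and R̃_{ijkl} := Σ_m (σ_{ikm}σ_{jlm} - σ_{ilm}σ_{jkm}). Then the Ricci trace satisfies R̃_{ii} := Σ_k R̃_{ikik} = (n-2)μ_i² + (n-2) Σ_k σ̊_{iik} μ_k + n Σ_k μ_k² - Σ_{j,k} σ̊_{ijk}². -/
/-- Ricci trace formula: for a fully symmetric cubic form `σ` with trace
decomposition `σ_ijk = σ̊_ijk + μ_i δ_jk + μ_j δ_ki + μ_k δ_ij`, `μ_k = H_k/(n+2)`,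
`R̃_ii = Σ_k R̃_ikik = (n-2)μ_i² + (n-2)Σ_k σ̊_iik μ_k + n Σ_k μ_k² - Σ_{j,k} σ̊_ijk²`. -/
theorem stmt_19 {n : ℕ}
    (σ : Fin n → Fin n → Fin n → ℝ)
    (hsym1 : ∀ i j k, σ i j k = σ j i k)
    (hsym2 : ∀ i j k, σ i j k = σ i k j)
    (i : Fin n) :
    let δ : Fin n → Fin n → ℝ := fun a b => if a = b then 1 else 0
    let H : Fin n → ℝ := fun k => ∑ a, σ a a k
    let μ : Fin n → ℝ := fun k => H k / ((n : ℝ) + 2)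
    let σ₀ : Fin n → Fin n → Fin n → ℝ :=
      fun a b c => σ a b c - μ a * δ b c - μ b * δ c a - μ c * δ a b
    let Rt : Fin n → Fin n → Fin n → Fin n → ℝ :=
      fun a b c d => ∑ m, (σ a c m * σ b d m - σ a d m * σ b c m)
    ∑ k, Rt i k i k
      = ((n : ℝ) - 2) * μ i ^ 2 + ((n : ℝ) - 2) * ∑ k, σ₀ i i k * μ k
        + (n : ℝ) * ∑ k, μ k ^ 2 - ∑ j, ∑ k, (σ₀ i j k) ^ 2 := by
  intro δ H μ σ₀ Rt
  have hn2 : ((n:ℝ)+2) ≠ 0 := by positivity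
  have hH : ∀ m, H m = ((n:ℝ)+2) * μ m := by
    intro m; simp only [μ]; field_simp
  have h1 : ∑ k, Rt i k i k
      = ((n:ℝ)+2) * (∑ k, σ i i k * μ k) - ∑ j, ∑ k, σ i j k ^ 2 := by
    have e1 : ∀ k : Fin n, Rt i k i k
        = (∑ m, σ i i m * σ k k m) - ∑ m, σ i k m ^ 2 := by
      intro k
      simp only [Rt]
      rw [Finset.sum_sub_distrib]
      congr 1
      exact Finset.sum_congr rfl fun m _ => by rw [hsym1 k i m]; ring
    rw [Finset.sum_congr rfl fun k _ => e1 k, Finset.sum_sub_distrib]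
    congr 1
    rw [Finset.sum_comm]
    rw [show ((n:ℝ)+2) * (∑ k, σ i i k * μ k) = ∑ k, σ i i k * (((n:ℝ)+2) * μ k) by
      rw [Finset.mul_sum]; exact Finset.sum_congr rfl fun k _ => by ring]
    exact Finset.sum_congr rfl fun m _ => by rw [← Finset.mul_sum, ← hH m]
  have h2 : ∑ k, σ₀ i i k * μ k
      = (∑ k, σ i i k * μ k) - 2 * μ i ^ 2 - ∑ k, μ k ^ 2 := by
    have e : ∀ k : Fin n, σ₀ i i k * μ k
        = σ i i k * μ k - μ i * δ i k * μ k - μ i * δ k i * μ k - μ k ^ 2 := by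
      intro k; simp only [σ₀, δ, eq_self_iff_true, if_true]; ring
    rw [Finset.sum_congr rfl fun k _ => e k]
    simp only [Finset.sum_sub_distrib, δ, ite_mul, mul_ite, mul_one, mul_zero, zero_mul,
      Finset.sum_ite_eq, Finset.sum_ite_eq', Finset.mem_univ, if_true]
    ring
  have h3 : ∑ j, ∑ k, σ₀ i j k ^ 2
      = (∑ j, ∑ k, σ i j k ^ 2) - 4 * (∑ k, σ i i k * μ k)
        + (2 - (n:ℝ)) * μ i ^ 2 + 2 * ∑ k, μ k ^ 2 := by
    have hpt : ∀ j k : Fin n, σ₀ i j k ^ 2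
        = σ i j k ^ 2 + μ i ^ 2 * δ j k + μ j ^ 2 * δ k i + μ k ^ 2 * δ i j
          - 2 * (σ i j k * μ i * δ j k) - 2 * (σ i j k * μ j * δ k i)
          - 2 * (σ i j k * μ k * δ i j)
          + 2 * (μ i * μ j * (δ j k * δ k i)) + 2 * (μ i * μ k * (δ j k * δ i j))
          + 2 * (μ j * μ k * (δ k i * δ i j)) := by
      intro j k; simp only [σ₀, δ]; split_ifs <;> ring
    rw [Finset.sum_congr rfl fun j _ => Finset.sum_congr rfl fun k _ => hpt j k]
    simp only [Finset.sum_add_distrib, Finset.sum_sub_distrib]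
    have s1 : ∑ j : Fin n, ∑ k : Fin n, μ i ^ 2 * δ j k = (n:ℝ) * μ i ^ 2 := by
      simp [δ, mul_ite, Finset.sum_ite_eq, Finset.card_univ, mul_comm]
    have s2 : ∑ j : Fin n, ∑ k : Fin n, μ j ^ 2 * δ k i = ∑ k, μ k ^ 2 := by
      simp [δ, mul_ite]
    have s3 : ∑ j : Fin n, ∑ k : Fin n, μ k ^ 2 * δ i j = ∑ k, μ k ^ 2 := by
      rw [Finset.sum_comm]; simp [δ, mul_ite]
    have e4 : ∀ j : Fin n, ∑ k : Fin n, 2 * (σ i j k * μ i * δ j k)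
        = 2 * (σ i j j * μ i) := by
      intro j; simp [δ, mul_ite, Finset.sum_ite_eq]
    have s4 : ∑ j : Fin n, ∑ k : Fin n, 2 * (σ i j k * μ i * δ j k)
        = 2 * (((n:ℝ)+2) * μ i ^ 2) := by
      rw [Finset.sum_congr rfl fun j _ => e4 j]
      rw [Finset.sum_congr rfl fun j (_ : j ∈ Finset.univ) =>
        (by rw [hsym1 i j j, hsym2 j i j] : 2 * (σ i j j * μ i) = 2 * (σ j j i * μ i))]
      rw [show ∑ j : Fin n, 2 * (σ j j i * μ i) = (∑ j, σ j j i) * (2 * μ i) by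
        rw [Finset.sum_mul]; exact Finset.sum_congr rfl fun j _ => by ring]
      rw [show ∑ j : Fin n, σ j j i = H i from rfl, hH i]; ring
    have e5 : ∀ j : Fin n, ∑ k : Fin n, 2 * (σ i j k * μ j * δ k i)
        = 2 * (σ i j i * μ j) := by
      intro j; simp [δ, mul_ite, Finset.sum_ite_eq']
    have s5 : ∑ j : Fin n, ∑ k : Fin n, 2 * (σ i j k * μ j * δ k i)
        = 2 * ∑ k, σ i i k * μ k := by
      rw [Finset.sum_congr rfl fun j _ => e5 j, Finset.mul_sum]
      exact Finset.sum_congr rfl fun j _ => by rw [hsym2 i j i]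
    have s6 : ∑ j : Fin n, ∑ k : Fin n, 2 * (σ i j k * μ k * δ i j)
        = 2 * ∑ k, σ i i k * μ k := by
      rw [Finset.sum_comm, Finset.mul_sum]
      refine Finset.sum_congr rfl fun k _ => ?_
      simp [δ, mul_ite, Finset.sum_ite_eq]
    have s7 : ∑ j : Fin n, ∑ k : Fin n, 2 * (μ i * μ j * (δ j k * δ k i))
        = 2 * μ i ^ 2 := by
      simp [δ, mul_ite, ite_mul, mul_zero, zero_mul, Finset.sum_ite_eq,
        Finset.sum_ite_eq']; ring
    have s8 : ∑ j : Fin n, ∑ k : Fin n, 2 * (μ i * μ k * (δ j k * δ i j))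
        = 2 * μ i ^ 2 := by
      simp [δ, mul_ite, ite_mul, mul_zero, zero_mul, Finset.sum_ite_eq,
        Finset.sum_ite_eq']; ring
    have s9 : ∑ j : Fin n, ∑ k : Fin n, 2 * (μ j * μ k * (δ k i * δ i j))
        = 2 * μ i ^ 2 := by
      simp [δ, mul_ite, ite_mul, mul_zero, zero_mul, Finset.sum_ite_eq,
        Finset.sum_ite_eq']; ring
    rw [s1, s2, s3, s4, s5, s6, s7, s8, s9]; ring
  rw [h1, h2, h3]; ring
end
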